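/- Let C ⊆ ℝⁿ⁻¹ be connected and let Y ⊆ C × ℝ be a set such that the projection p : Y → C is a local homeomorphism with finite fibers, and such that Y is closed in C × ℝ and bounded. Then Y is a finite disjoint union of graphs of continuous functions s₁ < s₂ < ⋯ < s_q : C → ℝ. -/

import Mathlib

/-!
Over `x₀ ∈ C` the fibre of `Y` is a finite set `t₁ < ⋯ < t_k`. Fix `r` so small that the balls
`B(tᵢ, r)` are disjoint. Since `Y` is closed and bounded, the tube lemma puts every fibre near
`x₀` inside `⋃ B(tᵢ, r)`; since the projection is open, each ball meets every nearby fibre; and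
since it is locally injective, each ball meets a nearby fibre at most once. Hence the sorted
fibre, as a list, varies continuously with `x`, its length is locally constant and so constant
on the connected set `C`, and its `i`-th entry is the `i`-th section.
-/

open Set Filter Topology Metric

theorem List.Forall₂.getD {α β : Type*} {R : α → β → Prop} {l₁ : List α} {l₂ : List β}
    (h : Forall₂ R l₁ l₂) {d₁ : α} {d₂ : β} (hd : R d₁ d₂) (i : ℕ) :
    R (l₁.getD i d₁) (l₂.getD i d₂) := by
  induction h generalizing i with
  | nil => simpa
  | cons hab _ ih => cases i with
    | zero => exact hab
    | succ i => exact ih i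

theorem List.mem_iff_exists_fin_getD {α : Type*} {l : List α} {q : ℕ} (h : l.length = q) (d : α)
    {a : α} : a ∈ l ↔ ∃ i : Fin q, l.getD i d = a := by
  subst h
  simp [List.mem_iff_get]

theorem List.SortedLT.getD_lt_getD {α : Type*} [Preorder α] {l : List α} (hl : l.SortedLT)
    {i j : ℕ} (hij : i < j) (hj : j < l.length) (d : α) : l.getD i d < l.getD j d := by
  rw [List.getD_eq_getElem _ _ (hij.trans hj), List.getD_eq_getElem _ _ hj]
  exact hl.getElem_lt_getElem_of_lt hij

section Fibers

variable {X E : Type*} [TopologicalSpace X] [TopologicalSpace E] {Z : Set (X × E)}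

theorem eventually_mk_preimage_subset (hZ : IsClosed Z) {K : Set E} (hK : IsCompact K)
    (hZK : Prod.snd '' Z ⊆ K) {x₀ : X} {U : Set E} (hU : IsOpen U) (h : Prod.mk x₀ ⁻¹' Z ⊆ U) :
    ∀ᶠ x in 𝓝 x₀, Prod.mk x ⁻¹' Z ⊆ U := by
  have : ∀ᶠ x in 𝓝 x₀, ∀ t ∈ K, (x, t) ∈ Z → t ∈ U := by
    refine hK.eventually_forall_of_forall_eventually fun t _ => ?_
    by_cases ht : (x₀, t) ∈ Z
    · exact mem_of_superset (continuous_snd.tendsto (x₀, t) (hU.mem_nhds (h ht)))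
        fun _ h _ => h
    · exact mem_of_superset (hZ.isOpen_compl.mem_nhds ht) fun _ h h' => absurd h' h
  filter_upwards [this] with x hx t ht using hx t (hZK ⟨(x, t), ht, rfl⟩) ht

theorem eventually_mk_preimage_inter_nonempty (hZ : IsOpenMap fun z : Z => (z : X × E).1)
    {x₀ : X} {t₀ : E} (h : (x₀, t₀) ∈ Z) {V : Set E} (hV : IsOpen V) (ht₀ : t₀ ∈ V) :
    ∀ᶠ x in 𝓝 x₀, (Prod.mk x ⁻¹' Z ∩ V).Nonempty := by
  have hW : IsOpen {z : Z | (z : X × E).2 ∈ V} := hV.preimage (by fun_prop)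
  filter_upwards [(hZ _ hW).mem_nhds ⟨⟨(x₀, t₀), h⟩, ht₀, rfl⟩]
  rintro _ ⟨⟨⟨x, t⟩, hz⟩, ht, rfl⟩
  exact ⟨t, hz, ht⟩

theorem exists_mem_nhds_eventually_mk_preimage_inter_subsingleton
    (hZ : IsLocallyInjective fun z : Z => (z : X × E).1) {x₀ : X} {t₀ : E} (h : (x₀, t₀) ∈ Z) :
    ∃ V ∈ 𝓝 t₀, ∀ᶠ x in 𝓝 x₀, (Prod.mk x ⁻¹' Z ∩ V).Subsingleton := by
  obtain ⟨U, hU, hzU, hinj⟩ := hZ ⟨(x₀, t₀), h⟩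
  obtain ⟨W, hW, rfl⟩ := isOpen_induced_iff.mp hU
  obtain ⟨u, hu, V, hV, huV⟩ := mem_nhds_prod_iff.mp (hW.mem_nhds hzU)
  refine ⟨V, hV, ?_⟩
  filter_upwards [hu] with x hx t ⟨ht, htV⟩ t' ⟨ht', ht'V⟩
  have := @hinj ⟨(x, t), ht⟩ (huV ⟨hx, htV⟩) ⟨(x, t'), ht'⟩ (huV ⟨hx, ht'V⟩) rfl
  exact congrArg (fun z : Z => (z : X × E).2) this

end Fibers

namespace Set.Finite

variable {α : Type*} [LinearOrder α] {s : Set α}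

noncomputable def sortedList (hs : s.Finite) : List α := hs.toFinset.sort (· ≤ ·)

theorem sortedLT_sortedList (hs : s.Finite) : hs.sortedList.SortedLT := Finset.sortedLT_sort _

theorem mem_sortedList (hs : s.Finite) {a : α} : a ∈ hs.sortedList ↔ a ∈ s := by
  simp [sortedList]

theorem sortedList_eq (hs : s.Finite) {l : List α} (hl : l.SortedLT) (h : ∀ a, a ∈ l ↔ a ∈ s) :
    hs.sortedList = l :=
  hs.sortedLT_sortedList.eq_of_mem_iff hl fun a => by rw [mem_sortedList, h]

end Set.Finite

theorem Set.Finite.forall₂_dist_sortedList {s t : Set ℝ} (hs : s.Finite) (ht : t.Finite) {r : ℝ}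
    (hsep : s.Pairwise fun a b => 2 * r ≤ dist a b) (hcover : t ⊆ ⋃ a ∈ s, ball a r)
    (hmeet : ∀ a ∈ s, (t ∩ ball a r).Nonempty) (huniq : ∀ a ∈ s, (t ∩ ball a r).Subsingleton) :
    List.Forall₂ (fun b a => dist b a < r) ht.sortedList hs.sortedList := by
  choose! φ hφt hφr using hmeet
  have hmono : ∀ a ∈ s, ∀ b ∈ s, a < b → φ a < φ b := by
    intro a ha b hb hab
    have h₁ : 2 * r ≤ dist a b := hsep ha hb hab.ne
    have h₂ := hφr a ha
    have h₃ := hφr b hb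
    rw [mem_ball, Real.dist_eq, abs_lt] at h₂ h₃
    rw [Real.dist_eq, abs_sub_comm, abs_of_pos (sub_pos.2 hab)] at h₁
    linarith
  have hsorted : (hs.sortedList.map φ).SortedLT := by
    refine List.Pairwise.sortedLT (List.pairwise_map.2 ?_)
    exact hs.sortedLT_sortedList.pairwise.imp_of_mem fun ha hb hab =>
      hmono _ (hs.mem_sortedList.1 ha) _ (hs.mem_sortedList.1 hb) hab
  have hmem : ∀ b, b ∈ hs.sortedList.map φ ↔ b ∈ t := by
    intro b
    simp only [List.mem_map, mem_sortedList]
    constructor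
    · rintro ⟨a, ha, rfl⟩
      exact hφt a ha
    · intro hb
      obtain ⟨a, ha, hba⟩ := mem_iUnion₂.1 (hcover hb)
      exact ⟨a, ha, huniq a ha ⟨hφt a ha, hφr a ha⟩ ⟨hb, hba⟩⟩
  rw [ht.sortedList_eq hsorted hmem, List.forall₂_map_left_iff, List.forall₂_same]
  exact fun a ha => hφr a (hs.mem_sortedList.1 ha)

section SortedFibers

variable {X : Type*} [TopologicalSpace X] {Z : Set (X × ℝ)}

theorem eventually_forall₂_dist_sortedList_mk_preimage
    (hloc : IsLocalHomeomorph fun z : Z => (z : X × ℝ).1)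
    (hfin : ∀ x, (Prod.mk x ⁻¹' Z).Finite) (hZ : IsClosed Z)
    (hbdd : Bornology.IsBounded (Prod.snd '' Z)) (x₀ : X) {ε : ℝ} (hε : 0 < ε) :
    ∀ᶠ x in 𝓝 x₀,
      List.Forall₂ (fun b a => dist b a < ε) (hfin x).sortedList (hfin x₀).sortedList := by
  set F := Prod.mk x₀ ⁻¹' Z
  have hF : F.Finite := hfin x₀
  have hinj : ∀ a ∈ F, ∃ δ > 0, ∀ᶠ x in 𝓝 x₀, (Prod.mk x ⁻¹' Z ∩ ball a δ).Subsingleton := by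
    intro a ha
    obtain ⟨V, hV, hev⟩ :=
      exists_mem_nhds_eventually_mk_preimage_inter_subsingleton hloc.isLocallyInjective ha
    obtain ⟨δ, hδ, hδV⟩ := Metric.mem_nhds_iff.1 hV
    exact ⟨δ, hδ, hev.mono fun x hx => hx.anti (inter_subset_inter_right _ hδV)⟩
  choose! δ hδ hδev using hinj
  have small : ∀ c > 0, ∀ᶠ r in 𝓝[>] (0 : ℝ), r ≤ c := fun c hc =>
    nhdsWithin_le_nhds ((eventually_lt_nhds hc).mono fun _ => le_of_lt)
  have hsep : ∀ᶠ r in 𝓝[>] (0 : ℝ), F.Pairwise fun a b => 2 * r ≤ dist a b :=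
    hF.eventually_all.2 fun a _ => hF.eventually_all.2 fun b _ =>
      eventually_imp_distrib_left.2 fun hab =>
        (small _ (half_pos (dist_pos.2 hab))).mono fun r hr => by linarith
  obtain ⟨r, ⟨hr, hrε⟩, hrδ, hrsep⟩ := ((eventually_mem_nhdsWithin.and (small ε hε)).and
    ((hF.eventually_all.2 fun a ha => small (δ a) (hδ a ha)).and hsep)).exists
  have hcover : ∀ᶠ x in 𝓝 x₀, Prod.mk x ⁻¹' Z ⊆ ⋃ a ∈ F, ball a r :=
    eventually_mk_preimage_subset hZ hbdd.isCompact_closure subset_closure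
      (isOpen_biUnion fun a _ => isOpen_ball) fun a ha => mem_biUnion ha (mem_ball_self hr)
  have hmeet : ∀ᶠ x in 𝓝 x₀, ∀ a ∈ F, (Prod.mk x ⁻¹' Z ∩ ball a r).Nonempty :=
    hF.eventually_all.2 fun a ha => eventually_mk_preimage_inter_nonempty hloc.isOpenMap ha
      isOpen_ball (mem_ball_self hr)
  have huniq : ∀ᶠ x in 𝓝 x₀, ∀ a ∈ F, (Prod.mk x ⁻¹' Z ∩ ball a r).Subsingleton :=
    hF.eventually_all.2 fun a ha => (hδev a ha).mono fun x hx =>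
      hx.anti (inter_subset_inter_right _ (ball_subset_ball (hrδ a ha)))
  filter_upwards [hcover, hmeet, huniq] with x hcover hmeet huniq
  exact (hF.forall₂_dist_sortedList (hfin x) hrsep hcover hmeet huniq).imp fun _ _ h =>
    h.trans_le hrε

theorem exists_continuous_strictMono_sections [PreconnectedSpace X]
    (hloc : IsLocalHomeomorph fun z : Z => (z : X × ℝ).1)
    (hfin : ∀ x, (Prod.mk x ⁻¹' Z).Finite) (hZ : IsClosed Z)
    (hbdd : Bornology.IsBounded (Prod.snd '' Z)) :
    ∃ (q : ℕ) (s : Fin q → X → ℝ), (∀ i, Continuous (s i)) ∧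
      (∀ i j : Fin q, i < j → ∀ x, s i x < s j x) ∧
      Z = ⋃ i : Fin q, {p : X × ℝ | p.2 = s i p.1} := by
  have hnear := eventually_forall₂_dist_sortedList_mk_preimage hloc hfin hZ hbdd
  have hlen : IsLocallyConstant fun x => (hfin x).sortedList.length :=
    (IsLocallyConstant.iff_eventually_eq _).2 fun x₀ =>
      (hnear x₀ one_pos).mono fun _ h => h.length_eq
  obtain ⟨q, hq⟩ := hlen.exists_eq_const
  have hq' (x : X) : (hfin x).sortedList.length = q := congrFun hq x
  refine ⟨q, fun i x => (hfin x).sortedList.getD i 0, fun i => ?_, ?_, ?_⟩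
  · refine continuous_iff_continuousAt.2 fun x₀ => Metric.tendsto_nhds.2 fun ε hε => ?_
    filter_upwards [hnear x₀ hε] with x hx
    exact hx.getD (by simpa using hε) i
  · intro i j hij x
    exact (hfin x).sortedLT_sortedList.getD_lt_getD hij (hq' x ▸ j.2) 0
  · ext ⟨x, t⟩
    have := List.mem_iff_exists_fin_getD (hq' x) 0 (a := t)
    simp only [Set.Finite.mem_sortedList, mem_preimage] at this
    simp only [this, mem_iUnion, mem_ofPred_eq, eq_comm]

end SortedFibers

def Homeomorph.subtypeProdOfFstMem {X E : Type*} [TopologicalSpace X] [TopologicalSpace E]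
    {C : Set X} {Y : Set (X × E)} (hY : ∀ p ∈ Y, p.1 ∈ C) :
    {p : C × E | ((p.1 : X), p.2) ∈ Y} ≃ₜ Y where
  toFun z := ⟨((z.1.1 : X), z.1.2), z.2⟩
  invFun y := ⟨(⟨y.1.1, hY _ y.2⟩, y.1.2), y.2⟩
  left_inv _ := rfl
  right_inv _ := rfl
  continuous_toFun := by fun_prop
  continuous_invFun := by fun_prop

/-- If `Y ⊆ C × ℝ` with `C ⊆ ℝⁿ⁻¹` connected, the projection `Y → C` is a local
homeomorphism with finite fibers, and `Y` is closed in `C × ℝ` and bounded, then `Y`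
is a finite disjoint union of graphs of continuous sections `s₁ < s₂ < ⋯ < s_q`. -/
theorem stmt_11 {m : ℕ} (C : Set (Fin m → ℝ)) (hC : IsConnected C)
    (Y : Set ((Fin m → ℝ) × ℝ)) (hsub : ∀ p ∈ Y, p.1 ∈ C)
    (hloc : IsLocalHomeomorph (fun y : Y => (⟨(y : (Fin m → ℝ) × ℝ).1, hsub y.1 y.2⟩ : C)))
    (hfib : ∀ x : Fin m → ℝ, {p ∈ Y | p.1 = x}.Finite)
    (hclosed : IsClosed {p : C × ℝ | ((p.1 : Fin m → ℝ), p.2) ∈ Y})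
    (hbdd : Bornology.IsBounded Y) :
    ∃ (q : ℕ) (s : Fin q → (Fin m → ℝ) → ℝ),
      (∀ i, ContinuousOn (s i) C) ∧
      (∀ i j : Fin q, i < j → ∀ x ∈ C, s i x < s j x) ∧
      Y = ⋃ i : Fin q, {p : (Fin m → ℝ) × ℝ | p.1 ∈ C ∧ p.2 = s i p.1} := by
  classical
  have := isPreconnected_iff_preconnectedSpace.1 hC.isPreconnected
  obtain ⟨q, s, hcont, hlt, hZ⟩ := exists_continuous_strictMono_sections
    (hloc.comp (Homeomorph.subtypeProdOfFstMem hsub).isLocalHomeomorph)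
    (fun c => ((hfib c).image Prod.snd).subset fun t ht => ⟨(c, t), ⟨ht, rfl⟩, rfl⟩)
    hclosed (hbdd.image_snd.subset (by rintro _ ⟨p, hp, rfl⟩; exact ⟨_, hp, rfl⟩))
  refine ⟨q, fun i x => if hx : x ∈ C then s i ⟨x, hx⟩ else 0, fun i => ?_, ?_, ?_⟩
  · rw [continuousOn_iff_continuous_domRestrict]
    convert hcont i using 1
    exact funext fun x => dif_pos x.2
  · intro i j hij x hx
    simpa [hx] using hlt i j hij ⟨x, hx⟩
  · have hmem (c : C) (t : ℝ) : ((c : Fin m → ℝ), t) ∈ Y ↔ ∃ i, t = s i c := by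
      simpa using Set.ext_iff.1 hZ (c, t)
    ext ⟨x, t⟩
    simp only [mem_iUnion, mem_ofPred_eq]
    constructor
    · intro h
      have hx := hsub _ h
      simpa [hx] using (hmem ⟨x, hx⟩ t).1 h
    · rintro ⟨i, hx, ht⟩
      rw [dif_pos hx] at ht
      exact (hmem ⟨x, hx⟩ t).2 ⟨i, ht⟩
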